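/- Suppose $\Omega\subset\mathbb{R}^d$ is bounded open, $f\in L^2(\Omega)$, $\psi\in W^{2,\infty}(\Omega)$, $g\in L^\infty(\Omega)$, and $(\lambda,u)\in L^p(\Omega)\times W^{1,\infty}_0(\Omega)$ solves the Lagrange multiplier–characteristic function problem: $-\nabla\cdot(\lambda\nabla u)-(-\Delta\psi-f)^+\chi_{\{u=\psi\}}=f$ weakly in $\Omega$, with $|\nabla u|\le g$, $\lambda\ge 1$, $(\lambda-1)(|\nabla u|-g)=0$, $u\ge\psi$ in $\Omega$, $u=0$ on $\partial\Omega$. Then $u$ solves the variational inequality: for all $v\in H^1_0(\Omega)$ with $|\nabla v|\le g$ and $v\ge\psi$ a.e., $\int_\Omega\nabla u\cdot\nabla(v-u)\ge\int_\Omega f(v-u)$. -/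

import Mathlib

/-!
Where `λ > 1` the complementarity condition forces `|∇u| = g ≥ |∇v|`, so `∇u · ∇(v - u) ≤ 0`
there and hence `λ ∇u · ∇(v - u) ≤ ∇u · ∇(v - u)` everywhere. The obstacle term tested against
`v - u` is nonnegative, since on `{u = ψ}` we have `v - u = v - ψ ≥ 0`. The weak equation then
bounds `∫ f (v - u)` by `∫ λ ∇u · ∇(v - u) ≤ ∫ ∇u · ∇(v - u)`.
-/

open MeasureTheory

/-- The Laplacian of `ψ`, as the trace of the second derivative. -/
noncomputable def lapl {d : ℕ} (ψ : EuclideanSpace ℝ (Fin d) → ℝ)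
    (x : EuclideanSpace ℝ (Fin d)) : ℝ :=
  ∑ i : Fin d,
    fderiv ℝ (fun y => fderiv ℝ ψ y (EuclideanSpace.single i 1)) x (EuclideanSpace.single i 1)

section

variable {E : Type*} [NormedAddCommGroup E] [InnerProductSpace ℝ E]

theorem real_inner_sub_self_nonpos {a b : E} (h : ‖b‖ ≤ ‖a‖) : inner ℝ a (b - a) ≤ 0 := by
  rw [inner_sub_right, real_inner_self_eq_norm_sq]
  nlinarith [real_inner_le_norm a b, norm_nonneg a, norm_nonneg b]

theorem mul_inner_sub_le_inner_sub_of_complementarity {l c : ℝ} {a b : E} (hl : 1 ≤ l)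
    (hcomp : (l - 1) * (‖a‖ - c) = 0) (hb : ‖b‖ ≤ c) :
    l * inner ℝ a (b - a) ≤ inner ℝ a (b - a) := by
  rcases mul_eq_zero.mp hcomp with hl1 | hac
  · rw [sub_eq_zero.mp hl1, one_mul]
  · have hnonpos : inner ℝ a (b - a) ≤ 0 := real_inner_sub_self_nonpos (by linarith)
    linarith [mul_nonpos_of_nonneg_of_nonpos (sub_nonneg.mpr hl) hnonpos]

end

theorem mul_indicator_coincidence_mul_sub_nonneg {α : Type*} {s : ℝ} {ψ u v : α → ℝ} {x : α}
    (hs : 0 ≤ s) (hv : ψ x ≤ v x) :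
    0 ≤ s * {y | u y = ψ y}.indicator 1 x * (v x - u x) := by
  by_cases hx : u x = ψ x
  · have hvu : 0 ≤ v x - u x := by linarith
    simp only [Set.indicator_of_mem (show x ∈ {y | u y = ψ y} from hx), Pi.one_apply, mul_one]
    exact mul_nonneg hs hvu
  · simp [Set.indicator_of_notMem (show x ∉ {y | u y = ψ y} from hx)]

theorem lmcf_solution_solves_vi_general
    {d : ℕ} (Ω : Set (EuclideanSpace ℝ (Fin d)))
    (f ψ g lam u : EuclideanSpace ℝ (Fin d) → ℝ)
    -- pointwise constraints on (λ, u)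
    (hlam : ∀ᵐ x ∂(volume.restrict Ω), 1 ≤ lam x)
    (hcomp : ∀ᵐ x ∂(volume.restrict Ω), (lam x - 1) * (‖gradient u x‖ - g x) = 0)
    -- the weak equation, tested against `v - u` for admissible `v`
    (hweak : ∀ v : EuclideanSpace ℝ (Fin d) → ℝ,
      (∀ x ∈ frontier Ω, v x = 0) →
      (∀ᵐ x ∂(volume.restrict Ω), ‖gradient v x‖ ≤ g x) →
      (∀ᵐ x ∂(volume.restrict Ω), ψ x ≤ v x) →
      IntegrableOn (fun x => lam x * inner ℝ (gradient u x) (gradient v x - gradient u x)) Ω →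
      IntegrableOn (fun x => (inner ℝ (gradient u x) (gradient v x - gradient u x) : ℝ)) Ω →
      IntegrableOn (fun x => f x * (v x - u x)) Ω →
      IntegrableOn (fun x =>
        max (-(lapl ψ x) - f x) 0 * ({y | u y = ψ y}.indicator 1 x) * (v x - u x)) Ω →
      (∫ x in Ω, lam x * inner ℝ (gradient u x) (gradient v x - gradient u x))
        - ∫ x in Ω, max (-(lapl ψ x) - f x) 0 * ({y | u y = ψ y}.indicator 1 x) * (v x - u x)
        = ∫ x in Ω, f x * (v x - u x)) :
    -- conclusion: u solves the variational inequality
    ∀ v : EuclideanSpace ℝ (Fin d) → ℝ,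
      (∀ x ∈ frontier Ω, v x = 0) →
      (∀ᵐ x ∂(volume.restrict Ω), ‖gradient v x‖ ≤ g x) →
      (∀ᵐ x ∂(volume.restrict Ω), ψ x ≤ v x) →
      IntegrableOn (fun x => lam x * inner ℝ (gradient u x) (gradient v x - gradient u x)) Ω →
      IntegrableOn (fun x => (inner ℝ (gradient u x) (gradient v x - gradient u x) : ℝ)) Ω →
      IntegrableOn (fun x => f x * (v x - u x)) Ω →
      IntegrableOn (fun x =>
        max (-(lapl ψ x) - f x) 0 * ({y | u y = ψ y}.indicator 1 x) * (v x - u x)) Ω →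
      (∫ x in Ω, f x * (v x - u x)) ≤
        ∫ x in Ω, (inner ℝ (gradient u x) (gradient v x - gradient u x) : ℝ) := by
  intro v hvb hvg hvo hlam_int h_int hf_int hobst_int
  have hweak_v := hweak v hvb hvg hvo hlam_int h_int hf_int hobst_int
  have hlam_le : (∫ x in Ω, lam x * inner ℝ (gradient u x) (gradient v x - gradient u x)) ≤
      ∫ x in Ω, (inner ℝ (gradient u x) (gradient v x - gradient u x) : ℝ) := by
    refine integral_mono_ae hlam_int h_int ?_
    filter_upwards [hlam, hcomp, hvg] with x hl hc hgv
    exact mul_inner_sub_le_inner_sub_of_complementarity hl hc hgv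
  have hobst_nonneg : 0 ≤ ∫ x in Ω,
      max (-(lapl ψ x) - f x) 0 * ({y | u y = ψ y}.indicator 1 x) * (v x - u x) := by
    refine integral_nonneg_of_ae ?_
    filter_upwards [hvo] with x hv
    exact mul_indicator_coincidence_mul_sub_nonneg (le_max_right _ _) hv
  linarith

/-- If `(λ, u)` solves the Lagrange multiplier–characteristic function problem
`-∇·(λ∇u) - (-Δψ - f)⁺ χ_{u=ψ} = f`, `|∇u| ≤ g`, `λ ≥ 1`, `(λ-1)(|∇u|-g) = 0`, `u ≥ ψ`,
`u = 0` on `∂Ω`, then `u` solves the variational inequality with obstacle and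
gradient constraint. -/
theorem lmcf_solution_solves_vi
    {d : ℕ} (Ω : Set (EuclideanSpace ℝ (Fin d))) (hΩo : IsOpen Ω)
    (hΩb : Bornology.IsBounded Ω)
    (f ψ g lam u : EuclideanSpace ℝ (Fin d) → ℝ)
    -- pointwise constraints on (λ, u)
    (hgrad : ∀ᵐ x ∂(volume.restrict Ω), ‖gradient u x‖ ≤ g x)
    (hlam : ∀ᵐ x ∂(volume.restrict Ω), 1 ≤ lam x)
    (hcomp : ∀ᵐ x ∂(volume.restrict Ω), (lam x - 1) * (‖gradient u x‖ - g x) = 0)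
    (hobst : ∀ᵐ x ∂(volume.restrict Ω), ψ x ≤ u x)
    (hbdry : ∀ x ∈ frontier Ω, u x = 0)
    -- the weak equation, tested against `v - u` for admissible `v`
    (hweak : ∀ v : EuclideanSpace ℝ (Fin d) → ℝ,
      (∀ x ∈ frontier Ω, v x = 0) →
      (∀ᵐ x ∂(volume.restrict Ω), ‖gradient v x‖ ≤ g x) →
      (∀ᵐ x ∂(volume.restrict Ω), ψ x ≤ v x) →
      IntegrableOn (fun x => lam x * inner ℝ (gradient u x) (gradient v x - gradient u x)) Ω →
      IntegrableOn (fun x => (inner ℝ (gradient u x) (gradient v x - gradient u x) : ℝ)) Ω →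
      IntegrableOn (fun x => f x * (v x - u x)) Ω →
      IntegrableOn (fun x =>
        max (-(lapl ψ x) - f x) 0 * ({y | u y = ψ y}.indicator 1 x) * (v x - u x)) Ω →
      (∫ x in Ω, lam x * inner ℝ (gradient u x) (gradient v x - gradient u x))
        - ∫ x in Ω, max (-(lapl ψ x) - f x) 0 * ({y | u y = ψ y}.indicator 1 x) * (v x - u x)
        = ∫ x in Ω, f x * (v x - u x)) :
    -- conclusion: u solves the variational inequality
    ∀ v : EuclideanSpace ℝ (Fin d) → ℝ,
      (∀ x ∈ frontier Ω, v x = 0) →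
      (∀ᵐ x ∂(volume.restrict Ω), ‖gradient v x‖ ≤ g x) →
      (∀ᵐ x ∂(volume.restrict Ω), ψ x ≤ v x) →
      IntegrableOn (fun x => lam x * inner ℝ (gradient u x) (gradient v x - gradient u x)) Ω →
      IntegrableOn (fun x => (inner ℝ (gradient u x) (gradient v x - gradient u x) : ℝ)) Ω →
      IntegrableOn (fun x => f x * (v x - u x)) Ω →
      IntegrableOn (fun x =>
        max (-(lapl ψ x) - f x) 0 * ({y | u y = ψ y}.indicator 1 x) * (v x - u x)) Ω →
      (∫ x in Ω, f x * (v x - u x)) ≤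
        ∫ x in Ω, (inner ℝ (gradient u x) (gradient v x - gradient u x) : ℝ) :=
  lmcf_solution_solves_vi_general Ω f ψ g lam u hlam hcomp hweak
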